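/- Let C = [X Z] be the m×(p+r) block matrix and assume C has full column rank p+r. Let G⁺ be the (p+r)×(p+r) block-diagonal matrix with upper-left block 0 (of size p×p) and lower-right block G⁻¹ (of size r×r). Then K = CᵀR⁻¹C + G⁺ is positive definite, and the effective degrees of freedom ρ = tr(C K⁻¹ Cᵀ R⁻¹) = tr(K⁻¹ CᵀR⁻¹C) satisfy p ≤ ρ ≤ p + r. -/

import Mathlib

/-!
Write `A = CᵀR⁻¹C`, which is positive definite because `C` is injective, and factor
`G⁺ = FᵀF` with `F = [0 W]`, `WᵀW = G⁻¹`. Then `K = A + FᵀF` is positive definite and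
`ρ = tr(K⁻¹A) = (p + r) - tr(F K⁻¹ Fᵀ)`. Since `K - FᵀF = A ≥ 0`, Schur complements give
`0 ≤ F K⁻¹ Fᵀ ≤ 1`, so `tr(F K⁻¹ Fᵀ) ∈ [0, r]`.
-/

open Matrix

namespace Matrix

variable {m n q : Type*} [Fintype n] [Fintype q]

lemma mulVec_injective_of_rank_eq_card {K : Type*} [Field K] {A : Matrix m n K}
    (h : A.rank = Fintype.card n) : Function.Injective A.mulVec := by
  have hker : Module.finrank K (LinearMap.ker A.mulVecLin) = 0 := by
    have := LinearMap.finrank_range_add_finrank_ker A.mulVecLin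
    rw [Module.finrank_fintype_fun_eq_card, ← rank] at this
    omega
  exact LinearMap.ker_eq_bot.mp (Submodule.finrank_eq_zero.mp hker)

open scoped MatrixOrder in
lemma PosSemidef.exists_eq_transpose_mul_self [DecidableEq n] {M : Matrix n n ℝ}
    (hM : M.PosSemidef) : ∃ W : Matrix n n ℝ, M = Wᵀ * W := by
  have hsqrt := nonneg_iff_posSemidef.mp (CFC.sqrt_nonneg M)
  refine ⟨CFC.sqrt M, ?_⟩
  rw [← conjTranspose_eq_transpose_of_trivial, hsqrt.1.eq,
    CFC.sqrt_mul_sqrt_self M (nonneg_iff_posSemidef.mpr hM)]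

lemma PosSemidef.exists_fromBlocks_zero_eq_transpose_mul_self [DecidableEq n] {M : Matrix n n ℝ}
    (hM : M.PosSemidef) (p : Type*) :
    ∃ F : Matrix n (p ⊕ n) ℝ, fromBlocks 0 0 0 M = Fᵀ * F := by
  obtain ⟨W, rfl⟩ := hM.exists_eq_transpose_mul_self
  exact ⟨fromCols 0 W, by rw [transpose_fromCols, fromRows_mul_fromCols]; simp⟩

/-- Both conditions say that `fromBlocks 1 F Fᵀ K` is positive semidefinite (Schur complements). -/
lemma PosDef.posSemidef_one_sub_mul_inv_mul_transpose [DecidableEq n] [DecidableEq q]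
    {K : Matrix n n ℝ} (hK : K.PosDef) {F : Matrix q n ℝ} (hKF : (K - Fᵀ * F).PosSemidef) :
    (1 - F * K⁻¹ * Fᵀ).PosSemidef := by
  have := hK.isUnit.invertible
  have : Invertible (1 : Matrix q q ℝ) := invertibleOne
  have hblock := (PosDef.fromBlocks₁₁ F K PosDef.one).mpr (by simpa using hKF)
  simpa using (PosDef.fromBlocks₂₂ 1 F hK).mp hblock

lemma PosDef.trace_inv_mul_transpose_mul_self_mem_Icc [DecidableEq n] [DecidableEq q]
    {K : Matrix n n ℝ} (hK : K.PosDef) {F : Matrix q n ℝ} (hKF : (K - Fᵀ * F).PosSemidef) :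
    (K⁻¹ * (Fᵀ * F)).trace ∈ Set.Icc 0 (Fintype.card q : ℝ) := by
  have htrace : (K⁻¹ * (Fᵀ * F)).trace = (F * K⁻¹ * Fᵀ).trace := by
    rw [← Matrix.mul_assoc, trace_mul_cycle]
  have hlower : (F * K⁻¹ * Fᵀ).PosSemidef := by
    simpa using hK.inv.posSemidef.mul_mul_conjTranspose_same F
  have hupper := (hK.posSemidef_one_sub_mul_inv_mul_transpose hKF).trace_nonneg
  rw [trace_sub, trace_one] at hupper
  exact ⟨htrace ▸ hlower.trace_nonneg, by linarith⟩

lemma PosDef.trace_inv_mul_mem_Icc [DecidableEq n] [DecidableEq q] {K A : Matrix n n ℝ}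
    (hK : K.PosDef) (hA : A.PosSemidef) {F : Matrix q n ℝ} (hKAF : K = A + Fᵀ * F) :
    (K⁻¹ * A).trace ∈ Set.Icc (Fintype.card n - Fintype.card q : ℝ) (Fintype.card n) := by
  have hKF : K - Fᵀ * F = A := by rw [hKAF, add_sub_cancel_right]
  have hsplit : (K⁻¹ * A).trace = Fintype.card n - (K⁻¹ * (Fᵀ * F)).trace := by
    rw [← hKF, Matrix.mul_sub, nonsing_inv_mul K hK.det_pos.ne'.isUnit, trace_sub, trace_one]
  obtain ⟨h0, h1⟩ := hK.trace_inv_mul_transpose_mul_self_mem_Icc (hKF ▸ hA)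
  constructor <;> linarith

end Matrix

theorem stmt12_general {m p r : ℕ}
    (R : Matrix (Fin m) (Fin m) ℝ) (G : Matrix (Fin r) (Fin r) ℝ)
    (hR : R.PosDef) (hG : G.PosDef)
    (C : Matrix (Fin m) (Fin p ⊕ Fin r) ℝ)
    (hCrank : C.rank = p + r)
    (Gplus : Matrix (Fin p ⊕ Fin r) (Fin p ⊕ Fin r) ℝ)
    (hGplus : Gplus = fromBlocks 0 0 0 G⁻¹)
    (K : Matrix (Fin p ⊕ Fin r) (Fin p ⊕ Fin r) ℝ)
    (hK : K = Cᵀ * R⁻¹ * C + Gplus)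
    (ρ : ℝ) (hρ : ρ = (C * K⁻¹ * Cᵀ * R⁻¹).trace) :
    K.PosDef ∧ ρ = (K⁻¹ * (Cᵀ * R⁻¹ * C)).trace ∧ (p : ℝ) ≤ ρ ∧ ρ ≤ p + r := by
  have hA : (Cᵀ * R⁻¹ * C).PosDef := by
    simpa using hR.inv.conjTranspose_mul_mul_same (mulVec_injective_of_rank_eq_card (by simpa))
  obtain ⟨F, hF⟩ := hG.inv.posSemidef.exists_fromBlocks_zero_eq_transpose_mul_self (Fin p)
  have hGplus_psd : Gplus.PosSemidef := by
    simpa [hGplus, hF] using posSemidef_conjTranspose_mul_self F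
  have hKpd : K.PosDef := hK ▸ hA.add_posSemidef hGplus_psd
  have hρA : ρ = (K⁻¹ * (Cᵀ * R⁻¹ * C)).trace := by
    rw [hρ, Matrix.mul_assoc, Matrix.mul_assoc, trace_mul_comm, Matrix.mul_assoc]
  obtain ⟨hlower, hupper⟩ := hKpd.trace_inv_mul_mem_Icc hA.posSemidef (by rw [hK, hGplus, hF])
  simp only [Fintype.card_sum, Fintype.card_fin, Nat.cast_add, add_sub_cancel_right] at hlower hupper
  exact ⟨hKpd, hρA, hρA ▸ hlower, hρA ▸ hupper⟩

/-- With `C = [X Z]` of full column rank `p + r` and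
`G⁺ = diag(0, G⁻¹)`, the Henderson matrix `K = CᵀR⁻¹C + G⁺` is positive
definite, and the effective degrees of freedom
`ρ = tr(C K⁻¹ Cᵀ R⁻¹) = tr(K⁻¹ CᵀR⁻¹C)` satisfy `p ≤ ρ ≤ p + r`. -/
theorem stmt12 {m p r : ℕ} (hm : 0 < m) (hp : 0 < p) (hr : 0 < r)
    (X : Matrix (Fin m) (Fin p) ℝ) (Z : Matrix (Fin m) (Fin r) ℝ)
    (R : Matrix (Fin m) (Fin m) ℝ) (G : Matrix (Fin r) (Fin r) ℝ)
    (hR : R.PosDef) (hG : G.PosDef)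
    (C : Matrix (Fin m) (Fin p ⊕ Fin r) ℝ) (hC : C = fromCols X Z)
    (hCrank : C.rank = p + r)
    (Gplus : Matrix (Fin p ⊕ Fin r) (Fin p ⊕ Fin r) ℝ)
    (hGplus : Gplus = fromBlocks 0 0 0 G⁻¹)
    (K : Matrix (Fin p ⊕ Fin r) (Fin p ⊕ Fin r) ℝ)
    (hK : K = Cᵀ * R⁻¹ * C + Gplus)
    (ρ : ℝ) (hρ : ρ = (C * K⁻¹ * Cᵀ * R⁻¹).trace) :
    K.PosDef ∧ ρ = (K⁻¹ * (Cᵀ * R⁻¹ * C)).trace ∧ (p : ℝ) ≤ ρ ∧ ρ ≤ p + r :=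
  stmt12_general R G hR hG C hCrank Gplus hGplus K hK ρ hρ
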